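/- arXiv:2008.13001 — 3 statements merged into one kernel-verified Lean document; each statement's English description precedes it below -/
import Mathlib

section
/- Under the hypotheses of the implicit function theorem with scaled norms (continuous invertibility of A = G_z(z⁰,ε⁰) in both the original norms and equivalent 'scaled' norms ‖·‖_{Z_s}, ‖·‖_{E_s}, together with the vanishing of the scaled difference quotient δ^s_ε(z¹,z⁰) := ‖G(z¹,ε) − G(z⁰,ε) − A(z¹−z⁰)‖_{E_s}/‖z¹−z⁰‖_{Z_s} as z¹ → z⁰ and ε → ε⁰), the solution z*(ε) of G(z*(ε),ε) = 0 satisfies the scaled estimate ‖z*(ε) − z⁰‖_{Z_s} ≤ c ‖ε − ε⁰‖_{E_s} with c = 2‖A^{-1}‖_{L(E_s,Z_s)}. -/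
/-!
Condition (ii) says that `F` is strictly differentiable at `z⁰` with invertible derivative `A`,
so by the inverse function theorem every `ε` near `ε⁰` is `F z` for some `z` near `z⁰`.
For such a solution, `A (z - z⁰) = (ε - ε⁰) - R` with `R` the scaled remainder of (iii), hence
`‖z - z⁰‖_s ≤ K ‖ε - ε⁰‖_s + K ‖-R‖_s`. Choosing the tolerance `η` in (iii) small enough against
`K` and the constants comparing the scaled norm of `E` with the original one makes the second term
at most `½ ‖z - z⁰‖_s`, which is absorbed into the left-hand side.
-/

open Topology Filter

theorem hasStrictFDerivAt_of_norm_sub_sub_le {𝕜 Z E : Type*} [NontriviallyNormedField 𝕜]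
    [NormedAddCommGroup Z] [NormedSpace 𝕜 Z] [NormedAddCommGroup E] [NormedSpace 𝕜 E]
    {f : Z → E} {f' : Z →L[𝕜] E} {z₀ : Z}
    (h : ∀ η > 0, ∃ δ > 0, ∀ z₁ z₂ : Z, ‖z₁ - z₀‖ < δ → ‖z₂ - z₀‖ < δ →
      ‖f z₁ - f z₂ - f' (z₁ - z₂)‖ ≤ η * ‖z₁ - z₂‖) :
    HasStrictFDerivAt f f' z₀ := by
  refine .of_isLittleO (Asymptotics.isLittleO_iff.2 fun η hη => ?_)
  obtain ⟨δ, hδ, hle⟩ := h η hη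
  filter_upwards [Metric.ball_mem_nhds (z₀, z₀) hδ] with p hp
  rw [Metric.mem_ball, Prod.dist_eq, max_lt_iff, dist_eq_norm, dist_eq_norm] at hp
  exact hle p.1 p.2 hp.1 hp.2

theorem HasStrictFDerivAt.eventually_exists_norm_sub_lt_eq {𝕜 Z E : Type*}
    [NontriviallyNormedField 𝕜] [NormedAddCommGroup Z] [NormedSpace 𝕜 Z] [CompleteSpace Z]
    [NormedAddCommGroup E] [NormedSpace 𝕜 E] {f : Z → E} {f' : Z ≃L[𝕜] E} {a : Z}
    (hf : HasStrictFDerivAt f (f' : Z →L[𝕜] E) a) {δ : ℝ} (hδ : 0 < δ) :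
    ∀ᶠ y in 𝓝 (f a), ∃ x, ‖x - a‖ < δ ∧ f x = y := by
  have himage := hf.map_nhds_eq_of_equiv ▸ image_mem_map (Metric.ball_mem_nhds a hδ)
  filter_upwards [himage] with y ⟨x, hx, hxy⟩
  exact ⟨x, by rwa [Metric.mem_ball, dist_eq_norm] at hx, hxy⟩

theorem apply_neg_le_of_norm_bounds {E : Type*} [SeminormedAddGroup E] {N : E → ℝ}
    {d₁ d₂ : ℝ} (hd₁ : 0 < d₁) (hd₂ : 0 ≤ d₂) (hlow : ∀ e, d₁ * ‖e‖ ≤ N e)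
    (hup : ∀ e, N e ≤ d₂ * ‖e‖) (e : E) :
    N (-e) ≤ d₂ / d₁ * N e :=
  calc N (-e) ≤ d₂ * ‖e‖ := by simpa only [norm_neg] using hup (-e)
    _ = d₂ / d₁ * (d₁ * ‖e‖) := by field_simp
    _ ≤ d₂ / d₁ * N e := by gcongr; exact hlow e

theorem le_two_mul_of_apply_sub_le {Z E : Type*} [AddCommGroup Z] [AddCommGroup E]
    {NZ : Z → ℝ} {NE : E → ℝ} {A : Z ≃+ E} {K C η : ℝ}
    (hNZadd : ∀ a b, NZ (a + b) ≤ NZ a + NZ b) (hNEneg : ∀ e, NE (-e) ≤ C * NE e)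
    (hK : 0 ≤ K) (hC : 0 ≤ C) (hAinv : ∀ e, NZ (A.symm e) ≤ K * NE e)
    (hη : K * C * η ≤ 1 / 2) {x : Z} {y : E} (hx : 0 ≤ NZ x)
    (hrem : NE (y - A x) ≤ η * NZ x) :
    NZ x ≤ 2 * K * NE y := by
  have hsplit : x = A.symm y + A.symm (-(y - A x)) := by
    rw [← map_add, neg_sub, add_sub_cancel, AddEquiv.symm_apply_apply]
  have habsorb : K * (C * (η * NZ x)) ≤ NZ x / 2 :=
    calc K * (C * (η * NZ x)) = K * C * η * NZ x := by ring
      _ ≤ 1 / 2 * NZ x := mul_le_mul_of_nonneg_right hη hx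
      _ = NZ x / 2 := by ring
  have hbound : NZ x ≤ K * NE y + K * (C * (η * NZ x)) :=
    calc NZ x = NZ (A.symm y + A.symm (-(y - A x))) := congrArg NZ hsplit
      _ ≤ NZ (A.symm y) + NZ (A.symm (-(y - A x))) := hNZadd _ _
      _ ≤ K * NE y + K * (C * (η * NZ x)) := by
        gcongr
        · exact hAinv y
        · exact (hAinv _).trans (by gcongr; exact (hNEneg _).trans (by gcongr))
  linarith

theorem stmt4_general {Z E : Type*}
    [NormedAddCommGroup Z] [NormedSpace ℝ Z] [CompleteSpace Z]
    [NormedAddCommGroup E] [NormedSpace ℝ E]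
    (F : Z → E) (z0 : Z) (ε0 : E) (hG0 : F z0 - ε0 = 0)
    (A : Z ≃L[ℝ] E)
    -- scaled norms on Z and E, equivalent to the original ones
    (NZ : Z → ℝ) (NE : E → ℝ)
    (hNZequiv : ∃ c₁ c₂ : ℝ, 0 < c₁ ∧ 0 < c₂ ∧
      ∀ z : Z, c₁ * ‖z‖ ≤ NZ z ∧ NZ z ≤ c₂ * ‖z‖)
    (hNEequiv : ∃ d₁ d₂ : ℝ, 0 < d₁ ∧ 0 < d₂ ∧
      ∀ e : E, d₁ * ‖e‖ ≤ NE e ∧ NE e ≤ d₂ * ‖e‖)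
    (hNZadd : ∀ z₁ z₂ : Z, NZ (z₁ + z₂) ≤ NZ z₁ + NZ z₂)
    -- bound on the inverse of A in the scaled norms: K = ‖A⁻¹‖_{L(E_s,Z_s)}
    (K : ℝ) (hK : 0 ≤ K) (hAinv : ∀ e : E, NZ (A.symm e) ≤ K * NE e)
    -- unscaled difference quotient condition (ii)
    (hii : ∀ η : ℝ, 0 < η → ∃ δ : ℝ, 0 < δ ∧ ∀ z1 z2 : Z, ∀ ε : E,
      ‖z1 - z0‖ < δ → ‖z2 - z0‖ < δ → ‖ε - ε0‖ < δ →
      ‖(F z1 - ε) - (F z2 - ε) - A (z1 - z2)‖ ≤ η * ‖z1 - z2‖)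
    -- scaled difference quotient condition (iii)
    (hiii : ∀ η : ℝ, 0 < η → ∃ δ : ℝ, 0 < δ ∧ ∀ z1 : Z, ∀ ε : E,
      ‖z1 - z0‖ < δ → ‖ε - ε0‖ < δ →
      NE ((F z1 - ε) - (F z0 - ε) - A (z1 - z0)) ≤ η * NZ (z1 - z0)) :
    ∃ rE : ℝ, 0 < rE ∧ ∃ rZ : ℝ, 0 < rZ ∧
      ∀ ε : E, ‖ε - ε0‖ ≤ rE → ∃ z : Z, ‖z - z0‖ ≤ rZ ∧ F z - ε = 0 ∧
        NZ (z - z0) ≤ (2 * K) * NE (ε - ε0) := by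
  obtain ⟨c₁, _, hc₁, _, hNZ⟩ := hNZequiv
  obtain ⟨d₁, d₂, hd₁, hd₂, hNE⟩ := hNEequiv
  have hF0 : F z0 = ε0 := sub_eq_zero.1 hG0
  have hstrict : HasStrictFDerivAt F (A : Z →L[ℝ] E) z0 := by
    refine hasStrictFDerivAt_of_norm_sub_sub_le fun η hη => ?_
    obtain ⟨δ, hδ, hle⟩ := hii η hη
    exact ⟨δ, hδ, fun z₁ z₂ h₁ h₂ => by simpa using hle z₁ z₂ ε0 h₁ h₂ (by simpa using hδ)⟩
  set C := d₂ / d₁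
  have hC : 0 < C := div_pos hd₂ hd₁
  set η := 1 / (2 * (K + 1) * C)
  have hη : K * C * η ≤ 1 / 2 := by
    have hKCη : K * C * η = K / (2 * (K + 1)) := by simp only [η]; field_simp
    rw [hKCη, div_le_div_iff₀ (by positivity) (by norm_num)]
    linarith
  obtain ⟨δ, hδ, hrem⟩ := hiii η (by positivity)
  obtain ⟨r, hr, hsolve⟩ := Metric.eventually_nhds_iff_ball.1 <|
    (hF0 ▸ hstrict.eventually_exists_norm_sub_lt_eq hδ).and (Metric.ball_mem_nhds ε0 hδ)
  refine ⟨r / 2, by positivity, δ, hδ, fun ε hε => ?_⟩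
  obtain ⟨⟨z, hz, hFz⟩, hεδ⟩ := hsolve ε (by rw [Metric.mem_ball, dist_eq_norm]; linarith)
  rw [dist_eq_norm] at hεδ
  refine ⟨z, hz.le, sub_eq_zero.2 hFz, ?_⟩
  refine le_two_mul_of_apply_sub_le (A := A.toAddEquiv) hNZadd
    (apply_neg_le_of_norm_bounds hd₁ hd₂.le (hNE · |>.1) (hNE · |>.2)) hK (by positivity)
    hAinv hη ((mul_nonneg hc₁.le (norm_nonneg _)).trans (hNZ _).1) ?_
  convert hrem z ε hz hεδ using 2
  rw [hFz, hF0]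
  abel

/-- Implicit function theorem with scaled norms: under invertibility of
A = G_z(z⁰,ε⁰) in the original and in equivalent scaled norms NZ, NE, and the
vanishing of the (unscaled and scaled) difference quotients, the solution
z*(ε) of G(z*(ε),ε) = 0 satisfies NZ(z*(ε) − z⁰) ≤ 2‖A⁻¹‖_{L(E_s,Z_s)} NE(ε − ε⁰). -/
theorem stmt4 {Z E : Type*}
    [NormedAddCommGroup Z] [NormedSpace ℝ Z] [CompleteSpace Z]
    [NormedAddCommGroup E] [NormedSpace ℝ E] [CompleteSpace E]
    (F : Z → E) (z0 : Z) (ε0 : E) (hG0 : F z0 - ε0 = 0)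
    (A : Z ≃L[ℝ] E) (hA : HasFDerivAt F (A : Z →L[ℝ] E) z0)
    -- scaled norms on Z and E, equivalent to the original ones
    (NZ : Z → ℝ) (NE : E → ℝ)
    (hNZequiv : ∃ c₁ c₂ : ℝ, 0 < c₁ ∧ 0 < c₂ ∧
      ∀ z : Z, c₁ * ‖z‖ ≤ NZ z ∧ NZ z ≤ c₂ * ‖z‖)
    (hNEequiv : ∃ d₁ d₂ : ℝ, 0 < d₁ ∧ 0 < d₂ ∧
      ∀ e : E, d₁ * ‖e‖ ≤ NE e ∧ NE e ≤ d₂ * ‖e‖)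
    (hNZadd : ∀ z₁ z₂ : Z, NZ (z₁ + z₂) ≤ NZ z₁ + NZ z₂)
    (hNEadd : ∀ e₁ e₂ : E, NE (e₁ + e₂) ≤ NE e₁ + NE e₂)
    -- bound on the inverse of A in the scaled norms: K = ‖A⁻¹‖_{L(E_s,Z_s)}
    (K : ℝ) (hK : 0 ≤ K) (hAinv : ∀ e : E, NZ (A.symm e) ≤ K * NE e)
    -- unscaled difference quotient condition (ii)
    (hii : ∀ η : ℝ, 0 < η → ∃ δ : ℝ, 0 < δ ∧ ∀ z1 z2 : Z, ∀ ε : E,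
      ‖z1 - z0‖ < δ → ‖z2 - z0‖ < δ → ‖ε - ε0‖ < δ →
      ‖(F z1 - ε) - (F z2 - ε) - A (z1 - z2)‖ ≤ η * ‖z1 - z2‖)
    -- scaled difference quotient condition (iii)
    (hiii : ∀ η : ℝ, 0 < η → ∃ δ : ℝ, 0 < δ ∧ ∀ z1 : Z, ∀ ε : E,
      ‖z1 - z0‖ < δ → ‖ε - ε0‖ < δ →
      NE ((F z1 - ε) - (F z0 - ε) - A (z1 - z0)) ≤ η * NZ (z1 - z0)) :
    ∃ rE : ℝ, 0 < rE ∧ ∃ rZ : ℝ, 0 < rZ ∧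
      ∀ ε : E, ‖ε - ε0‖ ≤ rE → ∃ z : Z, ‖z - z0‖ ≤ rZ ∧ F z - ε = 0 ∧
        NZ (z - z0) ≤ (2 * K) * NE (ε - ε0) :=
  stmt4_general F z0 ε0 hG0 A NZ NE hNZequiv hNEequiv hNZadd K hK hAinv hii hiii
end

section
/- Let W₁, W₂ be real Banach spaces, f : W₁ → W₂ continuous, and 1 ≤ p, q < ∞. If there are constants c₁ ∈ ℝ and c₂ ≥ 0 with ‖f(w)‖_{W₂} ≤ c₁ + c₂ ‖w‖_{W₁}^{p/q} for all w ∈ W₁, then the superposition operator Φ(x)(s) := f(x(s)) maps L_p(S;W₁) into L_q(S;W₂). -/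
open MeasureTheory
open scoped ENNReal

/-! The growth condition dominates `‖f ∘ x‖` pointwise by `c₁ + c₂ ‖x‖ ^ (p/q)`, and
`∫ (‖x‖ ^ (p/q)) ^ q = ∫ ‖x‖ ^ p < ∞`; constants are integrable because `μ` is finite. -/

theorem MeasureTheory.MemLp.norm_rpow_toReal_div {S E : Type*} [MeasurableSpace S]
    [NormedAddCommGroup E] {μ : Measure S} [IsFiniteMeasure μ] {p : ℝ≥0∞} {x : S → E}
    (hx : MemLp x p μ) (q : ℝ≥0∞) :
    MemLp (fun s => ‖x s‖ ^ (p.toReal / q.toReal)) q μ := by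
  rcases eq_or_ne (p.toReal / q.toReal) 0 with hr | hr
  -- `toReal` sends `0` and `∞` to `0`, so this case covers every degenerate exponent
  · simpa [hr] using memLp_const (1 : ℝ)
  obtain ⟨hp0, hp⟩ := ENNReal.toReal_ne_zero.mp (div_ne_zero_iff.mp hr).1
  obtain ⟨hq0, hq⟩ := ENNReal.toReal_ne_zero.mp (div_ne_zero_iff.mp hr).2
  have hpq : p / ENNReal.ofReal (p.toReal / q.toReal) = q := by
    rw [ENNReal.ofReal_div_of_pos (ENNReal.toReal_pos hq0 hq), ENNReal.ofReal_toReal hp,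
      ENNReal.ofReal_toReal hq, ENNReal.div_div_cancel hp0 hp]
  have hr0 : 0 ≤ p.toReal / q.toReal := div_nonneg ENNReal.toReal_nonneg ENNReal.toReal_nonneg
  simpa only [ENNReal.toReal_ofReal hr0, hpq] using
    hx.norm_rpow_div (ENNReal.ofReal (p.toReal / q.toReal))

theorem stmt6_general {S W₁ W₂ : Type*} [MeasurableSpace S]
    [NormedAddCommGroup W₁] [NormedAddCommGroup W₂]
    (μ : Measure S) [IsFiniteMeasure μ]
    (f : W₁ → W₂) (hf : Continuous f)
    (p q : ℝ≥0∞)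
    (c₁ c₂ : ℝ)
    (hgrowth : ∀ w : W₁, ‖f w‖ ≤ c₁ + c₂ * ‖w‖ ^ (p.toReal / q.toReal))
    (x : S → W₁) (hx : MemLp x p μ) :
    MemLp (fun s => f (x s)) q μ := by
  have hbound : MemLp (fun s => c₁ + c₂ * ‖x s‖ ^ (p.toReal / q.toReal)) q μ :=
    (memLp_const c₁).add ((hx.norm_rpow_toReal_div q).const_mul c₂)
  exact hbound.of_le (hf.comp_aestronglyMeasurable hx.1)
    (ae_of_all _ fun s => (hgrowth (x s)).trans (le_abs_self _))

/-- Growth condition implies the superposition operator maps L_p(S;W₁) into L_q(S;W₂). -/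
theorem stmt6 {S W₁ W₂ : Type*} [MeasurableSpace S]
    [NormedAddCommGroup W₁] [NormedAddCommGroup W₂]
    (μ : Measure S) [IsFiniteMeasure μ]
    (f : W₁ → W₂) (hf : Continuous f)
    (p q : ℝ≥0∞) (hp1 : 1 ≤ p) (hp : p ≠ ∞) (hq1 : 1 ≤ q) (hq : q ≠ ∞)
    (c₁ c₂ : ℝ) (hc₂ : 0 ≤ c₂)
    (hgrowth : ∀ w : W₁, ‖f w‖ ≤ c₁ + c₂ * ‖w‖ ^ (p.toReal / q.toReal))
    (x : S → W₁) (hx : MemLp x p μ) :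
    MemLp (fun s => f (x s)) q μ :=
  stmt6_general μ f hf p q c₁ c₂ hgrowth x hx
end

section
/- Let H be a Hilbert space, A a (possibly time-dependent) linear operator, and suppose δx, δλ ∈ W([0,T]) satisfy the coupled optimality system: −δλ' = A*δλ − Lδx + l₁, δλ(T) = δλ_T, δx' = Aδx + BQ^{-1}B*δλ + l₂, δx(0) = δx₀, where L = C*C is self-adjoint nonnegative and Q = Q* > 0. Then ‖Cδx‖²_{L_2(0,T;H)} + ‖Q^{-1/2}B*δλ‖²_{L_2(0,T;H)} ≤ |⟨l₁, δx⟩_{L_2(0,T;H)}| + |⟨l₂, δλ⟩_{L_2(0,T;H)}| + |⟨δx₀, δλ(0)⟩_H| + |⟨δλ_T, δx(T)⟩_H|. -/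
open MeasureTheory Set ContinuousLinearMap
open scoped RealInnerProductSpace

/-!
Pair the state `x` with the costate `p`. By the product rule, `t ↦ ⟪x t, p t⟫` has derivative
`⟪x, L x⟫ + ⟪M p, p⟫ + ⟪l₂, p⟫ - ⟪l₁, x⟫`: the two terms in `A` cancel because the costate is
driven by the adjoint `A†`. Integrating over `[0, T]` expresses `‖C x‖²_{L₂} + ‖K p‖²_{L₂}` through
the forcing terms and the boundary values of `⟪x, p⟫`, and each of these is at most its absolute value.
-/

section OptimalitySystem

variable {H : Type*} [NormedAddCommGroup H] [InnerProductSpace ℝ H] [CompleteSpace H]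
  {A M L : H →L[ℝ] H} {x p l₁ l₂ : ℝ → H}

theorem hasDerivAt_inner_state_costate {t : ℝ}
    (hp : HasDerivAt p (-(adjoint A) (p t) + L (x t) - l₁ t) t)
    (hx : HasDerivAt x (A (x t) + M (p t) + l₂ t) t) :
    HasDerivAt (fun s => ⟪x s, p s⟫)
      (⟪x t, L (x t)⟫ + ⟪M (p t), p t⟫ + ⟪l₂ t, p t⟫ - ⟪l₁ t, x t⟫) t := by
  refine (hx.inner ℝ hp).congr_deriv ?_
  simp only [inner_sub_right, inner_add_right, inner_neg_right, inner_add_left,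
    adjoint_inner_right, real_inner_comm (x t) (l₁ t)]
  ring

theorem integral_inner_add_integral_inner_eq_of_state_costate {a b : ℝ} (hab : a ≤ b)
    (hxc : Continuous x) (hpc : Continuous p) (hl₁ : Continuous l₁) (hl₂ : Continuous l₂)
    (hp : ∀ t ∈ Icc a b, HasDerivAt p (-(adjoint A) (p t) + L (x t) - l₁ t) t)
    (hx : ∀ t ∈ Icc a b, HasDerivAt x (A (x t) + M (p t) + l₂ t) t) :
    (∫ t in a..b, ⟪x t, L (x t)⟫) + (∫ t in a..b, ⟪M (p t), p t⟫) =
      ⟪x b, p b⟫ - ⟪x a, p a⟫ - (∫ t in a..b, ⟪l₂ t, p t⟫) + ∫ t in a..b, ⟪l₁ t, x t⟫ := by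
  have hderiv : ∀ t ∈ uIcc a b, HasDerivAt (fun s => ⟪x s, p s⟫)
      (⟪x t, L (x t)⟫ + ⟪M (p t), p t⟫ + ⟪l₂ t, p t⟫ - ⟪l₁ t, x t⟫) t := by
    intro t ht
    rw [uIcc_of_le hab] at ht
    exact hasDerivAt_inner_state_costate (hp t ht) (hx t ht)
  have iL : IntervalIntegrable (fun t => ⟪x t, L (x t)⟫) volume a b := by
    apply Continuous.intervalIntegrable; fun_prop
  have iM : IntervalIntegrable (fun t => ⟪M (p t), p t⟫) volume a b := by
    apply Continuous.intervalIntegrable; fun_prop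
  have i₂ : IntervalIntegrable (fun t => ⟪l₂ t, p t⟫) volume a b :=
    (hl₂.inner hpc).intervalIntegrable a b
  have i₁ : IntervalIntegrable (fun t => ⟪l₁ t, x t⟫) volume a b :=
    (hl₁.inner hxc).intervalIntegrable a b
  have hftc := intervalIntegral.integral_eq_sub_of_hasDerivAt hderiv
    (((iL.add iM).add i₂).sub i₁)
  rw [intervalIntegral.integral_sub ((iL.add iM).add i₂) i₁,
    intervalIntegral.integral_add (iL.add iM) i₂, intervalIntegral.integral_add iL iM] at hftc
  linarith

end OptimalitySystem

theorem stmt17_general {H : Type*} [NormedAddCommGroup H] [InnerProductSpace ℝ H]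
    [CompleteSpace H]
    (T : ℝ) (hT : 0 < T)
    (A B C L Qinv K : H →L[ℝ] H)
    (hL : L = (ContinuousLinearMap.adjoint C).comp C)
    (hK : ∀ v : H, ‖K v‖ ^ 2 = ⟪(B.comp (Qinv.comp (ContinuousLinearMap.adjoint B))) v, v⟫)
    (δx dlam l₁ l₂ : ℝ → H)
    (hcx : Continuous δx) (hcl : Continuous dlam)
    (hcl₁ : Continuous l₁) (hcl₂ : Continuous l₂)
    (hadjoint_eq : ∀ t ∈ Icc (0 : ℝ) T,
      HasDerivAt dlam (-(ContinuousLinearMap.adjoint A) (dlam t) + L (δx t) - l₁ t) t)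
    (hstate_eq : ∀ t ∈ Icc (0 : ℝ) T,
      HasDerivAt δx (A (δx t) + (B.comp (Qinv.comp (ContinuousLinearMap.adjoint B))) (dlam t)
        + l₂ t) t) :
    (∫ t in (0 : ℝ)..T, ‖C (δx t)‖ ^ 2) + (∫ t in (0 : ℝ)..T, ‖K (dlam t)‖ ^ 2) ≤
      |∫ t in (0 : ℝ)..T, ⟪l₁ t, δx t⟫| + |∫ t in (0 : ℝ)..T, ⟪l₂ t, dlam t⟫| +
        |⟪δx 0, dlam 0⟫| + |⟪dlam T, δx T⟫| := by
  have hC : ∀ v : H, ⟪v, L v⟫ = ‖C v‖ ^ 2 := fun v => by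
    rw [hL, apply_norm_sq_eq_inner_adjoint_right, RCLike.re_to_real]
  have henergy := integral_inner_add_integral_inner_eq_of_state_costate hT.le hcx hcl hcl₁ hcl₂
    hadjoint_eq hstate_eq
  simp only [hC, ← hK] at henergy
  rw [henergy]
  linarith [le_abs_self (∫ t in (0 : ℝ)..T, ⟪l₁ t, δx t⟫),
    neg_abs_le (∫ t in (0 : ℝ)..T, ⟪l₂ t, dlam t⟫), neg_abs_le ⟪δx 0, dlam 0⟫,
    le_abs_self ⟪dlam T, δx T⟫, real_inner_comm (dlam T) (δx T)]

/-- Energy estimate for the coupled linear-quadratic optimality system: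
if −δλ' = A*δλ − Lδx + l₁ and δx' = Aδx + BQ⁻¹B*δλ + l₂ with L = C*C and
‖Kδλ‖² = ⟨BQ⁻¹B*δλ, δλ⟩ (K playing the role of Q^{-1/2}B*), then
‖Cδx‖²_{L₂} + ‖Q^{-1/2}B*δλ‖²_{L₂} ≤ |⟨l₁,δx⟩| + |⟨l₂,δλ⟩| + |⟨δx₀,δλ(0)⟩| + |⟨δλ_T,δx(T)⟩|. -/
theorem stmt17 {H : Type*} [NormedAddCommGroup H] [InnerProductSpace ℝ H]
    [CompleteSpace H]
    (T : ℝ) (hT : 0 < T)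
    (A B C L Qinv K : H →L[ℝ] H)
    (hL : L = (ContinuousLinearMap.adjoint C).comp C)
    (hQpos : ∀ v : H, 0 ≤ ⟪Qinv v, v⟫)
    (hK : ∀ v : H, ‖K v‖ ^ 2 = ⟪(B.comp (Qinv.comp (ContinuousLinearMap.adjoint B))) v, v⟫)
    (δx dlam l₁ l₂ : ℝ → H)
    (hcx : Continuous δx) (hcl : Continuous dlam)
    (hcl₁ : Continuous l₁) (hcl₂ : Continuous l₂)
    (hadjoint_eq : ∀ t ∈ Icc (0 : ℝ) T,
      HasDerivAt dlam (-(ContinuousLinearMap.adjoint A) (dlam t) + L (δx t) - l₁ t) t)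
    (hstate_eq : ∀ t ∈ Icc (0 : ℝ) T,
      HasDerivAt δx (A (δx t) + (B.comp (Qinv.comp (ContinuousLinearMap.adjoint B))) (dlam t)
        + l₂ t) t) :
    (∫ t in (0 : ℝ)..T, ‖C (δx t)‖ ^ 2) + (∫ t in (0 : ℝ)..T, ‖K (dlam t)‖ ^ 2) ≤
      |∫ t in (0 : ℝ)..T, ⟪l₁ t, δx t⟫| + |∫ t in (0 : ℝ)..T, ⟪l₂ t, dlam t⟫| +
        |⟪δx 0, dlam 0⟫| + |⟪dlam T, δx T⟫| :=
  stmt17_general T hT A B C L Qinv K hL hK δx dlam l₁ l₂ hcx hcl hcl₁ hcl₂ hadjoint_eq hstate_eq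
end
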